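/- Consider the homogeneous pinning model (\omega_n \equiv 1) for the (p,q)-walk with 0 < p < 1. Then \lim_{\beta \to \infty} \beta\,( f_c(\beta) - 1 ) = \log q - \log(p/2); equivalently, f_c(\beta) = 1 + \beta^{-1}(\log q - \log(p/2)) + o(1/\beta) as \beta \to \infty. -/

import Mathlib

open Filter Finset

noncomputable section
open scoped Classical

/-- The three possible increments of the `(p,q)`-walk: `-1, 0, +1`. -/
def step : Fin 3 → ℤ := ![-1, 0, 1]

/-- The probability weights of the three increments: `p/2, q = 1-p, p/2`. -/
def wt (p : ℝ) : Fin 3 → ℝ := ![p / 2, 1 - p, p / 2]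

/-- Position of the walk after `n` steps, given the increments `ξ`. -/
def pos {N : ℕ} (ξ : Fin N → Fin 3) (n : ℕ) : ℤ :=
  ∑ i : Fin N, if (i : ℕ) < n then step (ξ i) else 0

/-- Probability weight of the path with increments `ξ`. -/
def pwt (p : ℝ) {N : ℕ} (ξ : Fin N → Fin 3) : ℝ := ∏ i : Fin N, wt p (ξ i)

/-- The pinning partition function `Z_{N,ω}^{β,f}` of the `(p,q)`-walk with
charges `ω`, inverse temperature `β` and force `f`. -/
def Z (p : ℝ) (ω : ℕ → ℝ) (β f : ℝ) (N : ℕ) : ℝ :=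
  ∑ ξ : Fin N → Fin 3,
    pwt p ξ *
      Real.exp (β * ∑ n ∈ Finset.Icc 1 N, (if pos ξ n = 0 then ω n else 0)
        + β * f * ((pos ξ N : ℤ) : ℝ))

/-- `g(y) = log (p cosh y + q)`. -/
def g (p y : ℝ) : ℝ := Real.log (p * Real.cosh y + (1 - p))

/-! Staying at the origin for all `N` steps gives `Z_N ≥ (q e^β)^N`. Conversely, a move changes
the position, so one of its endpoints is away from the origin, and the time-`0` endpoint is not;
hence the walk makes at most twice as many moves as it has unpinned times, and
`Z_N ≤ ((q + p e^{-β/2}) e^β)^N`. Thus `F(β) = β + log q + o(1)`. For `y = β f_c(β) ≥ 0` we have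
`p cosh y + q = e^{F(β)}`, so `cosh y · e^{-β} → q/p`, and since `y ≥ 0` the term `e^{-y}` is
negligible: `e^{y-β} → 2q/p`. -/

open Real

lemma pos_zero {N : ℕ} (ξ : Fin N → Fin 3) : pos ξ 0 = 0 := by
  simp [pos]

lemma pos_succ {N : ℕ} (ξ : Fin N → Fin 3) (i : Fin N) :
    pos ξ (i + 1) = pos ξ i + step (ξ i) := by
  have hi : step (ξ i) = ∑ j, if j = i then step (ξ j) else 0 := by simp
  rw [pos, pos, hi, ← sum_add_distrib]
  refine sum_congr rfl fun j _ => ?_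
  rcases lt_trichotomy (j : ℕ) i with h | h | h
  · simp [h, Fin.ne_of_lt h, Nat.lt_succ_of_lt h]
  · simp [Fin.ext h]
  · simp [Fin.ne_of_gt h, h.not_gt, show ¬ (j : ℕ) < i + 1 by omega]

lemma sum_moves_le_two_mul_sum_unpinned {N : ℕ} (ξ : Fin N → Fin 3) :
    (∑ i : Fin N, if step (ξ i) = 0 then (0 : ℝ) else 1)
      ≤ 2 * ∑ n ∈ Icc 1 N, if pos ξ n = 0 then (0 : ℝ) else 1 := by
  set u : ℕ → ℝ := fun n => if pos ξ n = 0 then 0 else 1 with hu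
  have hadj : ∀ i : Fin N, (if step (ξ i) = 0 then (0 : ℝ) else 1) ≤ u i + u (i + 1) := by
    intro i
    have hsucc := pos_succ ξ i
    simp only [hu]
    split_ifs <;> first | omega | norm_num
  have hshift : ∑ i : Fin N, u (i + 1) = ∑ n ∈ Icc 1 N, u n := by
    rw [Fin.sum_univ_eq_sum_range (fun i => u (i + 1)), range_eq_Ico, sum_Ico_add',
      zero_add, Ico_add_one_right_eq_Icc]
  have hlag : ∑ i : Fin N, u i ≤ ∑ i : Fin N, u (i + 1) := by
    have hu0 : u 0 = 0 := by simp [hu, pos_zero]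
    have huN : 0 ≤ u N := by simp only [hu]; split_ifs <;> norm_num
    have hsum := sum_range_succ' u N
    rw [sum_range_succ, hu0] at hsum
    rw [Fin.sum_univ_eq_sum_range u, Fin.sum_univ_eq_sum_range (fun i => u (i + 1))]
    linarith
  calc _ ≤ ∑ i : Fin N, (u i + u (i + 1)) := sum_le_sum fun i _ => hadj i
    _ ≤ 2 * ∑ n ∈ Icc 1 N, u n := by rw [sum_add_distrib]; linarith

lemma wt_nonneg {p : ℝ} (hp : 0 ≤ p) (hp1 : p ≤ 1) (a : Fin 3) : 0 ≤ wt p a := by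
  fin_cases a <;> simp [wt] <;> linarith

lemma pwt_nonneg {p : ℝ} (hp : 0 ≤ p) (hp1 : p ≤ 1) {N : ℕ} (ξ : Fin N → Fin 3) :
    0 ≤ pwt p ξ :=
  prod_nonneg fun _ _ => wt_nonneg hp hp1 _

lemma Z_zero_force (p : ℝ) (β : ℝ) (N : ℕ) :
    Z p (fun _ => 1) β 0 N =
      ∑ ξ : Fin N → Fin 3, pwt p ξ * exp (β * ∑ n ∈ Icc 1 N, if pos ξ n = 0 then 1 else 0) := by
  simp [Z]

lemma pow_mul_exp_le_Z {p : ℝ} (hp : 0 ≤ p) (hp1 : p ≤ 1) (β : ℝ) (N : ℕ) :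
    ((1 - p) * exp β) ^ N ≤ Z p (fun _ => 1) β 0 N := by
  have hstay : ∀ n, pos (fun _ : Fin N => (1 : Fin 3)) n = 0 := by simp [pos, step]
  rw [Z_zero_force]
  refine le_of_eq_of_le ?_ (single_le_sum (fun ξ _ => mul_nonneg (pwt_nonneg hp hp1 ξ)
    (exp_pos _).le) (mem_univ fun _ => 1))
  simp [pwt, wt, hstay, mul_pow, ← exp_nat_mul, mul_comm]

lemma Z_le_pow {p : ℝ} (hp : 0 ≤ p) (hp1 : p ≤ 1) {β : ℝ} (hβ : 0 ≤ β) (N : ℕ) :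
    Z p (fun _ => 1) β 0 N ≤ ((1 - p + p * exp (-(β / 2))) * exp β) ^ N := by
  set c : Fin 3 → ℝ := fun a => if step a = 0 then 0 else 1
  have hterm : ∀ ξ : Fin N → Fin 3,
      exp (β * ∑ n ∈ Icc 1 N, if pos ξ n = 0 then 1 else 0)
        ≤ exp β ^ N * ∏ i, exp (-(β / 2) * c (ξ i)) := by
    intro ξ
    have hsplit : ∑ n ∈ Icc 1 N, (if pos ξ n = 0 then (1 : ℝ) else 0)
        = N - ∑ n ∈ Icc 1 N, if pos ξ n = 0 then (0 : ℝ) else 1 := by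
      rw [eq_sub_iff_add_eq, ← sum_add_distrib,
        sum_congr rfl fun n _ => show (if pos ξ n = 0 then (1 : ℝ) else 0)
          + (if pos ξ n = 0 then 0 else 1) = 1 by split_ifs <;> norm_num]
      simp
    rw [← exp_sum, ← exp_nat_mul, ← exp_add, exp_le_exp, hsplit, ← mul_sum]
    nlinarith [sum_moves_le_two_mul_sum_unpinned ξ]
  have hstep : ∑ a, wt p a * exp (-(β / 2) * c a) = 1 - p + p * exp (-(β / 2)) := by
    simp [Fin.sum_univ_three, wt, c, step]
    ring
  calc Z p (fun _ => 1) β 0 N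
      ≤ ∑ ξ : Fin N → Fin 3, pwt p ξ * (exp β ^ N * ∏ i, exp (-(β / 2) * c (ξ i))) := by
        rw [Z_zero_force]
        exact sum_le_sum fun ξ _ => mul_le_mul_of_nonneg_left (hterm ξ) (pwt_nonneg hp hp1 ξ)
    _ = ((1 - p + p * exp (-(β / 2))) * exp β) ^ N := by
        rw [← hstep, mul_pow, Fintype.sum_pow, sum_mul]
        refine sum_congr rfl fun ξ _ => ?_
        rw [prod_mul_distrib, pwt]
        ring

lemma mem_Icc_log_of_pow_le_of_le_pow {A B F : ℝ} {z : ℕ → ℝ} (hA : 0 < A)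
    (hlow : ∀ N, A ^ N ≤ z N) (hup : ∀ N, z N ≤ B ^ N)
    (h : Tendsto (fun N : ℕ => log (z N) / N) atTop (nhds F)) :
    F ∈ Set.Icc (log A) (log B) := by
  refine isClosed_Icc.mem_of_tendsto h ?_
  filter_upwards [eventually_ge_atTop 1] with N hN
  have hN : (0 : ℝ) < N := by exact_mod_cast hN
  have hz : 0 < z N := (pow_pos hA N).trans_le (hlow N)
  constructor
  · rw [le_div_iff₀ hN, mul_comm, ← log_pow]
    exact log_le_log (pow_pos hA N) (hlow N)
  · rw [div_le_iff₀ hN, mul_comm, ← log_pow]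
    exact log_le_log hz (hup N)

lemma tendsto_free_energy_sub {p : ℝ} (hp : 0 < p) (hp1 : p < 1) (F : ℝ → ℝ)
    (hF : ∀ β : ℝ, 0 ≤ β →
      Tendsto (fun N : ℕ => log (Z p (fun _ => 1) β 0 N) / N) atTop (nhds (F β))) :
    Tendsto (fun β => F β - β) atTop (nhds (log (1 - p))) := by
  have hq : 0 < 1 - p := by linarith
  have hbounds : ∀ β : ℝ, 0 ≤ β →
      F β - β ∈ Set.Icc (log (1 - p)) (log (1 - p + p * exp (-(β / 2)))) := by
    intro β hβ
    have h := mem_Icc_log_of_pow_le_of_le_pow (mul_pos hq (exp_pos β))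
      (pow_mul_exp_le_Z hp.le hp1.le β) (Z_le_pow hp.le hp1.le hβ) (hF β hβ)
    rwa [log_mul hq.ne' (exp_ne_zero β), log_mul (by positivity) (exp_ne_zero β), log_exp,
      ← Set.sub_mem_Icc_iff_left] at h
  have hupper : Tendsto (fun β : ℝ => log (1 - p + p * exp (-(β / 2)))) atTop
      (nhds (log (1 - p))) := by
    have hexp : Tendsto (fun β : ℝ => exp (-(β / 2))) atTop (nhds 0) :=
      tendsto_exp_neg_atTop_nhds_zero.comp (tendsto_id.atTop_div_const two_pos)
    simpa using ((hexp.const_mul p).const_add (1 - p)).log (by simpa using hq.ne')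
  exact tendsto_of_tendsto_of_tendsto_of_le_of_le' tendsto_const_nhds hupper
    ((eventually_ge_atTop 0).mono fun β hβ => (hbounds β hβ).1)
    ((eventually_ge_atTop 0).mono fun β hβ => (hbounds β hβ).2)

lemma exp_g {p : ℝ} (hp : 0 ≤ p) (y : ℝ) : exp (g p y) = p * cosh y + (1 - p) := by
  have : 0 ≤ p * (cosh y - 1) := mul_nonneg hp (by linarith [one_le_cosh y])
  exact exp_log (by linarith)

lemma tendsto_sub_of_tendsto_cosh_mul_exp_neg {α : Type*} {l : Filter α} {y f : α → ℝ} {c : ℝ}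
    (hc : 0 < c) (hf : Tendsto f l atTop) (hy : ∀ᶠ a in l, 0 ≤ y a)
    (h : Tendsto (fun a => cosh (y a) * exp (-f a)) l (nhds c)) :
    Tendsto (fun a => y a - f a) l (nhds (log (2 * c))) := by
  have hexp_f : Tendsto (fun a => exp (-f a)) l (nhds 0) :=
    tendsto_exp_neg_atTop_nhds_zero.comp hf
  have hsmall : Tendsto (fun a => exp (-y a) * exp (-f a)) l (nhds 0) := by
    refine squeeze_zero' (.of_forall fun a => by positivity) ?_ hexp_f
    filter_upwards [hy] with a ha
    exact mul_le_of_le_one_left (exp_pos _).le (exp_le_one_iff.mpr (neg_nonpos.mpr ha))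
  have hexp : Tendsto (fun a => exp (y a - f a)) l (nhds (2 * c)) := by
    have hdecomp : ∀ a,
        exp (y a - f a) = 2 * (cosh (y a) * exp (-f a)) - exp (-y a) * exp (-f a) := by
      intro a
      rw [cosh_eq, sub_eq_add_neg, exp_add]
      ring
    simpa [hdecomp] using (h.const_mul 2).sub hsmall
  simpa using hexp.log (by positivity)

theorem stmt_5_general (p : ℝ) (hp : 0 < p) (hp1 : p < 1)
    (F : ℝ → ℝ)
    (hF : ∀ β : ℝ, 0 ≤ β →
      Tendsto (fun N : ℕ => Real.log (Z p (fun _ => 1) β 0 N) / N) atTop (nhds (F β)))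
    (ginv : ℝ → ℝ)
    (hginv_right : ∀ x : ℝ, 0 ≤ x → g p (ginv x) = x)
    (hginv_nonneg : ∀ x : ℝ, 0 ≤ x → 0 ≤ ginv x) :
    Tendsto (fun β : ℝ => β * (ginv (F β) / β - 1)) atTop
      (nhds (Real.log (1 - p) - Real.log (p / 2))) := by
  have hq : 0 < 1 - p := by linarith
  have hFβ := tendsto_free_energy_sub hp hp1 F hF
  have hF_nonneg : ∀ᶠ β in atTop, 0 ≤ F β := by
    filter_upwards [hFβ.eventually (eventually_ge_nhds (sub_one_lt (log (1 - p)))),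
      eventually_ge_atTop (1 - log (1 - p))] with β h1 h2
    linarith
  have hcosh : Tendsto (fun β => cosh (ginv (F β)) * exp (-β)) atTop (nhds ((1 - p) / p)) := by
    have hlim : Tendsto (fun β => (exp (F β - β) - (1 - p) * exp (-β)) / p) atTop
        (nhds ((1 - p) / p)) := by
      simpa [exp_log hq] using
        ((hFβ.rexp).sub (tendsto_exp_neg_atTop_nhds_zero.const_mul (1 - p))).div_const p
    refine hlim.congr' ?_
    filter_upwards [hF_nonneg] with β hβ
    have h := exp_g hp.le (ginv (F β))
    rw [hginv_right _ hβ] at h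
    rw [exp_sub, h, exp_neg]
    field_simp
    ring
  have hy := tendsto_sub_of_tendsto_cosh_mul_exp_neg (div_pos hq hp) tendsto_id
    (hF_nonneg.mono fun β => hginv_nonneg (F β)) hcosh
  rw [show 2 * ((1 - p) / p) = (1 - p) / (p / 2) by ring, log_div hq.ne' (by positivity)] at hy
  refine hy.congr' ?_
  filter_upwards [eventually_ne_atTop 0] with β hβ
  simp only [id]
  field_simp

/-- for the homogeneous model with `0 < p < 1`,
`β (f_c(β) - 1) → log q - log(p/2)` as `β → ∞`. -/
theorem stmt_5 (p : ℝ) (hp : 0 < p) (hp1 : p < 1)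
    (F : ℝ → ℝ)
    (hF : ∀ β : ℝ, 0 ≤ β →
      Tendsto (fun N : ℕ => Real.log (Z p (fun _ => 1) β 0 N) / N) atTop (nhds (F β)))
    (ginv : ℝ → ℝ)
    (hginv_left : ∀ y : ℝ, 0 ≤ y → ginv (g p y) = y)
    (hginv_right : ∀ x : ℝ, 0 ≤ x → g p (ginv x) = x)
    (hginv_nonneg : ∀ x : ℝ, 0 ≤ x → 0 ≤ ginv x) :
    Tendsto (fun β : ℝ => β * (ginv (F β) / β - 1)) atTop
      (nhds (Real.log (1 - p) - Real.log (p / 2))) :=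
  stmt_5_general p hp hp1 F hF ginv hginv_right hginv_nonneg
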